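/- arXiv:2302.06720 — 2 statements merged into one kernel-verified Lean document; each statement's English description precedes it below -/
import Mathlib

section
/- In the Hilbert summability setup, for every matrix A = (a_{nk}) with Σ_k |a_{nk}|‖P_k‖ < ∞ for each n, the following are equivalent: (i) S_n^A(h) → h weakly, for all h ∈ H; (ii) S_n^A(h) → h in norm, for all h ∈ H; (iii) (S_n^A)*(h) → h weakly, for all h ∈ H; (iv) (S_n^A)*(h) → h in norm, for all h ∈ H. -/
open Filter Topology

variable {H : Type*} [NormedAddCommGroup H] [InnerProductSpace ℂ H] [CompleteSpace H]

/-- The summation operator `S n ^ A h = Σ_k a n k (⟨h, f k⟩/⟨e k, f k⟩) e k` (the pairing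
`⟨x, y⟩` of the paper, linear in the first variable, is `inner ℂ y x` in Mathlib's convention). -/
noncomputable def hilbertSummationOp (a : ℕ → ℕ → ℂ) (e f : ℕ → H) (n : ℕ) (h : H) : H :=
  ∑' k : ℕ, (a n k * ((inner ℂ (f k) h : ℂ) / (inner ℂ (f k) (e k) : ℂ))) • e k

/-- The Hilbert-space adjoint `(S n ^ A)* h = Σ_k conj (a n k) (⟨h, e k⟩/⟨f k, e k⟩) f k`. -/
noncomputable def hilbertSummationOpStar (a : ℕ → ℕ → ℂ) (e f : ℕ → H) (n : ℕ) (h : H) : H :=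
  ∑' k : ℕ, ((starRingEnd ℂ) (a n k) * ((inner ℂ (e k) h : ℂ) / (inner ℂ (e k) (f k) : ℂ))) • f k

/-- The rank-one projection `P k` as a continuous linear map. -/
noncomputable def hsRankOne (e f : ℕ → H) (k : ℕ) : H →L[ℂ] H :=
  (((inner ℂ (f k) (e k) : ℂ))⁻¹ • (innerSL ℂ (f k))).smulRight (e k)

lemma hsRankOne_apply (e f : ℕ → H) (k : ℕ) (h : H) :
    hsRankOne e f k h = (((inner ℂ (f k) (e k) : ℂ))⁻¹ * (inner ℂ (f k) h : ℂ)) • e k := by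
  simp [hsRankOne, smul_eq_mul]

lemma hsRankOne_norm (e f : ℕ → H) (k : ℕ) :
    ‖hsRankOne e f k‖ = ‖e k‖ * ‖f k‖ / ‖(inner ℂ (f k) (e k) : ℂ)‖ := by
  rw [hsRankOne, ContinuousLinearMap.norm_smulRight_apply, norm_smul, innerSL_apply_norm,
    norm_inv]
  ring

lemma hs_summable_clm (a : ℕ → ℕ → ℂ) (e f : ℕ → H)
    (hA : ∀ n, Summable fun k =>
      ‖a n k‖ * (‖e k‖ * ‖f k‖ / ‖(inner ℂ (f k) (e k) : ℂ)‖)) (n : ℕ) :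
    Summable fun k => a n k • hsRankOne e f k := by
  apply Summable.of_norm
  refine (hA n).congr fun k => ?_
  rw [norm_smul, hsRankOne_norm]

/-- The summation operator as a continuous linear map. -/
noncomputable def hsCLM (a : ℕ → ℕ → ℂ) (e f : ℕ → H) (n : ℕ) : H →L[ℂ] H :=
  ∑' k, a n k • hsRankOne e f k

lemma hsCLM_apply (a : ℕ → ℕ → ℂ) (e f : ℕ → H)
    (hA : ∀ n, Summable fun k =>
      ‖a n k‖ * (‖e k‖ * ‖f k‖ / ‖(inner ℂ (f k) (e k) : ℂ)‖)) (n : ℕ) (h : H) :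
    hsCLM a e f n h = hilbertSummationOp a e f n h := by
  have h1 : (ContinuousLinearMap.apply ℂ H h) (∑' k, a n k • hsRankOne e f k)
      = ∑' k, (ContinuousLinearMap.apply ℂ H h) (a n k • hsRankOne e f k) :=
    (ContinuousLinearMap.apply ℂ H h).map_tsum (hs_summable_clm a e f hA n)
  simp only [ContinuousLinearMap.apply_apply] at h1
  rw [hsCLM, h1, hilbertSummationOp]
  refine tsum_congr fun k => ?_
  rw [ContinuousLinearMap.smul_apply, hsRankOne_apply, smul_smul, div_eq_mul_inv]
  ring_nf

lemma hs_summable_terms (a : ℕ → ℕ → ℂ) (e f : ℕ → H)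
    (hA : ∀ n, Summable fun k =>
      ‖a n k‖ * (‖e k‖ * ‖f k‖ / ‖(inner ℂ (f k) (e k) : ℂ)‖)) (n : ℕ) (h : H) :
    Summable fun k => (a n k * ((inner ℂ (f k) h : ℂ) / (inner ℂ (f k) (e k) : ℂ))) • e k := by
  have hs := (hs_summable_clm a e f hA n).map (ContinuousLinearMap.apply ℂ H h)
    (ContinuousLinearMap.apply ℂ H h).continuous
  refine hs.congr fun k => ?_
  simp only [Function.comp_apply, ContinuousLinearMap.apply_apply,
    ContinuousLinearMap.smul_apply, hsRankOne_apply, smul_smul, div_eq_mul_inv]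
  ring_nf

/-- Weak convergence implies norm convergence for the summation operators. -/
lemma hs_weak_to_norm (e f : ℕ → H)
    (horth : ∀ j k : ℕ, j ≠ k → (inner ℂ (f k) (e j) : ℂ) = 0)
    (hnz : ∀ k, (inner ℂ (f k) (e k) : ℂ) ≠ 0)
    (a : ℕ → ℕ → ℂ)
    (hA : ∀ n, Summable fun k =>
      ‖a n k‖ * (‖e k‖ * ‖f k‖ / ‖(inner ℂ (f k) (e k) : ℂ)‖))
    (hw : ∀ h g : H, Tendsto (fun n : ℕ => (inner ℂ (hilbertSummationOp a e f n h) g : ℂ))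
          atTop (𝓝 (inner ℂ h g))) :
    ∀ h : H, Tendsto (fun n : ℕ => hilbertSummationOp a e f n h) atTop (𝓝 h) := by
  have hSapp : ∀ (n : ℕ) (h : H), hilbertSummationOp a e f n h = hsCLM a e f n h :=
    fun n h => (hsCLM_apply a e f hA n h).symm
  -- Step A: uniform boundedness
  obtain ⟨M, hM⟩ : ∃ M, ∀ n, ‖hsCLM a e f n‖ ≤ M := by
    apply banach_steinhaus
    intro h
    obtain ⟨C, hC⟩ : ∃ C, ∀ n, ‖innerSL ℂ (hsCLM a e f n h)‖ ≤ C := by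
      apply banach_steinhaus
      intro g
      obtain ⟨C, hC⟩ := (Filter.Tendsto.bddAbove_range ((hw h g).norm))
      refine ⟨C, fun n => ?_⟩
      have := hC (Set.mem_range_self n)
      simpa [innerSL_apply_apply, hSapp] using this
    exact ⟨C, fun n => by rw [← innerSL_apply_norm ℂ]; exact hC n⟩
  have hM0 : (0:ℝ) ≤ M := le_trans (norm_nonneg _) (hM 0)
  -- Step B: `S n (e j) = a n j • e j` and `a n j → 1`
  have hS_e : ∀ n j, hilbertSummationOp a e f n (e j) = a n j • e j := by
    intro n j
    rw [hilbertSummationOp, tsum_eq_single j]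
    · rw [div_self (hnz j), mul_one]
    · intro k hk
      rw [horth j k (Ne.symm hk), zero_div, mul_zero, zero_smul]
  have haj : ∀ j, Tendsto (fun n => a n j) atTop (𝓝 1) := by
    intro j
    have h1 := hw (e j) (f j)
    simp only [hS_e, inner_smul_left] at h1
    have hd : (inner ℂ (e j) (f j) : ℂ) ≠ 0 := by
      intro h0
      apply hnz j
      have := congrArg (starRingEnd ℂ) h0
      rwa [inner_conj_symm, map_zero] at this
    have h3 := h1.mul_const (inner ℂ (e j) (f j) : ℂ)⁻¹
    rw [mul_inv_cancel₀ hd] at h3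
    have h4 : Tendsto (fun n => (starRingEnd ℂ) (a n j)) atTop (𝓝 1) :=
      h3.congr fun n => mul_inv_cancel_right₀ hd _
    have h5 := (continuous_star.tendsto ((1:ℂ))).comp h4
    simpa [Function.comp_def, Complex.star_def, Complex.conj_conj] using h5
  -- Step C: norm convergence on the span of the `e k`
  have hspan : ∀ p ∈ Submodule.span ℂ (Set.range e),
      Tendsto (fun n => hsCLM a e f n p) atTop (𝓝 p) := by
    intro p hp
    induction hp using Submodule.span_induction with
    | mem x hx =>
      obtain ⟨j, rfl⟩ := hx
      have he : ∀ n, hsCLM a e f n (e j) = a n j • e j := fun n => by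
        rw [← hSapp, hS_e]
      simp only [he]
      simpa using (haj j).smul (tendsto_const_nhds (x := e j))
    | zero => simpa using tendsto_const_nhds
    | add x y hx hy ihx ihy => simpa [map_add] using ihx.add ihy
    | smul c x hx ih => simpa [map_smul] using ih.const_smul c
  -- Step D: every `h` lies in the closure of the span
  have hmem : ∀ h : H, h ∈ (Submodule.span ℂ (Set.range e)).topologicalClosure := by
    intro h
    rw [← Submodule.orthogonal_orthogonal_eq_closure, Submodule.mem_orthogonal]
    intro g hg
    have hterm : ∀ k, (inner ℂ g (e k) : ℂ) = 0 := by
      intro k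
      rw [← inner_conj_symm, (Submodule.mem_orthogonal _ g).mp hg (e k)
        (Submodule.subset_span (Set.mem_range_self k)), map_zero]
    have hz : ∀ n, (inner ℂ g (hilbertSummationOp a e f n h) : ℂ) = 0 := by
      intro n
      have h1 : (innerSL ℂ g) (hilbertSummationOp a e f n h)
          = ∑' k, (innerSL ℂ g) ((a n k * ((inner ℂ (f k) h : ℂ) /
            (inner ℂ (f k) (e k) : ℂ))) • e k) :=
        (innerSL ℂ g).map_tsum (hs_summable_terms a e f hA n h)
      simpa [innerSL_apply_apply, inner_smul_right, hterm] using h1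
    have h2 : Tendsto (fun n : ℕ => (starRingEnd ℂ)
        (inner ℂ (hilbertSummationOp a e f n h) g : ℂ)) atTop
        (𝓝 ((starRingEnd ℂ) (inner ℂ h g : ℂ))) :=
      ((continuous_star.tendsto _).comp (hw h g))
    rw [inner_conj_symm] at h2
    have h3 : Tendsto (fun _ : ℕ => (0:ℂ)) atTop (𝓝 (inner ℂ g h : ℂ)) :=
      h2.congr fun n => by rw [inner_conj_symm, hz n]
    exact tendsto_nhds_unique h3 tendsto_const_nhds
  -- Step E: ε/3-argument
  intro h
  simp only [hSapp]
  rw [Metric.tendsto_atTop]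
  intro ε hε
  have hδ : (0:ℝ) < ε / (2 * (M + 1)) := by positivity
  have hcl : h ∈ closure ((Submodule.span ℂ (Set.range e) : Submodule ℂ H) : Set H) := by
    have := hmem h
    rwa [← SetLike.mem_coe, Submodule.topologicalClosure_coe] at this
  obtain ⟨p, hp, hdist⟩ := Metric.mem_closure_iff.mp hcl _ hδ
  obtain ⟨N, hN⟩ := (Metric.tendsto_atTop.mp (hspan p hp)) (ε / 2) (by positivity)
  refine ⟨N, fun n hn => ?_⟩
  have hd' : ‖h - p‖ < ε / (2 * (M + 1)) := by rw [← dist_eq_norm]; exact hdist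
  rw [dist_eq_norm]
  have split : hsCLM a e f n h - h
      = hsCLM a e f n (h - p) + (hsCLM a e f n p - p) + (p - h) := by
    rw [map_sub]; abel
  rw [split]
  calc ‖hsCLM a e f n (h - p) + (hsCLM a e f n p - p) + (p - h)‖
      ≤ ‖hsCLM a e f n (h - p)‖ + ‖hsCLM a e f n p - p‖ + ‖p - h‖ := norm_add₃_le
    _ ≤ M * ‖h - p‖ + ε / 2 + ‖h - p‖ := by
        gcongr
        · exact le_trans ((hsCLM a e f n).le_opNorm _)
            (mul_le_mul_of_nonneg_right (hM n) (norm_nonneg _))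
        · rw [← dist_eq_norm]; exact le_of_lt (hN n hn)
        · rw [norm_sub_rev]
    _ = (M + 1) * ‖h - p‖ + ε / 2 := by ring
    _ < (M + 1) * (ε / (2 * (M + 1))) + ε / 2 := by
        have : (0:ℝ) < M + 1 := by linarith
        exact add_lt_add_left (mul_lt_mul_of_pos_left hd' this) _
    _ = ε := by field_simp; ring

/-- The adjoint identity relating the two summation operators. -/
lemma hs_inner_star (e f : ℕ → H)
    (a : ℕ → ℕ → ℂ)
    (hA : ∀ n, Summable fun k =>
      ‖a n k‖ * (‖e k‖ * ‖f k‖ / ‖(inner ℂ (f k) (e k) : ℂ)‖))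
    (hA' : ∀ n, Summable fun k =>
      ‖(starRingEnd ℂ) (a n k)‖ * (‖f k‖ * ‖e k‖ / ‖(inner ℂ (e k) (f k) : ℂ)‖))
    (n : ℕ) (h g : H) :
    (inner ℂ (hilbertSummationOpStar a e f n h) g : ℂ)
      = (starRingEnd ℂ) (inner ℂ (hilbertSummationOp a e f n g) h : ℂ) := by
  have hsum1 : Summable fun k =>
      ((starRingEnd ℂ) (a n k) * ((inner ℂ (e k) h : ℂ) / (inner ℂ (e k) (f k) : ℂ))) • f k :=
    hs_summable_terms (fun n k => (starRingEnd ℂ) (a n k)) f e hA' n h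
  have hsum2 : Summable fun k =>
      (a n k * ((inner ℂ (f k) g : ℂ) / (inner ℂ (f k) (e k) : ℂ))) • e k :=
    hs_summable_terms a e f hA n g
  have hL : (inner ℂ (hilbertSummationOpStar a e f n h) g : ℂ)
      = (starRingEnd ℂ) (∑' k, ((starRingEnd ℂ) (a n k) *
          ((inner ℂ (e k) h : ℂ) / (inner ℂ (e k) (f k) : ℂ))) * (inner ℂ g (f k) : ℂ)) := by
    rw [← inner_conj_symm]
    congr 1
    have h1 : (innerSL ℂ g) (hilbertSummationOpStar a e f n h)
        = ∑' k, (innerSL ℂ g) (((starRingEnd ℂ) (a n k) *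
            ((inner ℂ (e k) h : ℂ) / (inner ℂ (e k) (f k) : ℂ))) • f k) :=
      (innerSL ℂ g).map_tsum hsum1
    simpa [innerSL_apply_apply, inner_smul_right] using h1
  have hR : (starRingEnd ℂ) (inner ℂ (hilbertSummationOp a e f n g) h : ℂ)
      = ∑' k, (a n k * ((inner ℂ (f k) g : ℂ) / (inner ℂ (f k) (e k) : ℂ))) * (inner ℂ h (e k) : ℂ) := by
    rw [← inner_conj_symm, Complex.conj_conj]
    have h1 : (innerSL ℂ h) (hilbertSummationOp a e f n g)
        = ∑' k, (innerSL ℂ h) ((a n k *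
            ((inner ℂ (f k) g : ℂ) / (inner ℂ (f k) (e k) : ℂ))) • e k) :=
      (innerSL ℂ h).map_tsum hsum2
    simpa [innerSL_apply_apply, inner_smul_right] using h1
  rw [hL, hR]
  rw [starRingEnd_apply, tsum_star]
  refine tsum_congr fun k => ?_
  rw [← starRingEnd_apply, map_mul, map_mul, map_div₀, Complex.conj_conj, inner_conj_symm,
    inner_conj_symm, inner_conj_symm]
  ring

/-- **Theorem 5.2 (Hilbert-space equivalence).** In the Hilbert summability set-up, for every
admissible matrix `A`, the statements (i) `S n ^ A h → h` weakly for all `h`; (ii) in norm for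
all `h`; (iii) `(S n ^ A)* h → h` weakly for all `h`; (iv) in norm for all `h`, are
equivalent. -/
theorem hilbert_summability_equivalence (e f : ℕ → H)
    (horth : ∀ j k : ℕ, j ≠ k → (inner ℂ (f k) (e j) : ℂ) = 0)
    (hnz : ∀ k, (inner ℂ (f k) (e k) : ℂ) ≠ 0)
    (a : ℕ → ℕ → ℂ)
    (hA : ∀ n, Summable fun k =>
      ‖a n k‖ * (‖e k‖ * ‖f k‖ / ‖(inner ℂ (f k) (e k) : ℂ)‖)) :
    List.TFAE
      [∀ h g : H, Tendsto (fun n : ℕ => (inner ℂ (hilbertSummationOp a e f n h) g : ℂ))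
          atTop (𝓝 (inner ℂ h g)),
        ∀ h : H, Tendsto (fun n : ℕ => hilbertSummationOp a e f n h) atTop (𝓝 h),
        ∀ h g : H, Tendsto (fun n : ℕ => (inner ℂ (hilbertSummationOpStar a e f n h) g : ℂ))
          atTop (𝓝 (inner ℂ h g)),
        ∀ h : H, Tendsto (fun n : ℕ => hilbertSummationOpStar a e f n h) atTop (𝓝 h)] := by
  -- transposed data
  set a' : ℕ → ℕ → ℂ := fun n k => (starRingEnd ℂ) (a n k) with ha'
  have horth' : ∀ j k : ℕ, j ≠ k → (inner ℂ (e k) (f j) : ℂ) = 0 := by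
    intro j k hjk
    rw [← inner_conj_symm, horth k j (Ne.symm hjk), map_zero]
  have hnz' : ∀ k, (inner ℂ (e k) (f k) : ℂ) ≠ 0 := by
    intro k h0
    apply hnz k
    rw [← inner_conj_symm, h0, map_zero]
  have hA' : ∀ n, Summable fun k =>
      ‖a' n k‖ * (‖f k‖ * ‖e k‖ / ‖(inner ℂ (e k) (f k) : ℂ)‖) := by
    intro n
    refine (hA n).congr fun k => ?_
    rw [ha']
    rw [RCLike.norm_conj, ← inner_conj_symm (e k) (f k), RCLike.norm_conj,
      mul_comm ‖e k‖ ‖f k‖]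
  have hstar_eq : ∀ (n : ℕ) (h : H),
      hilbertSummationOpStar a e f n h = hilbertSummationOp a' f e n h := fun n h => rfl
  tfae_have 2 → 1 := by
    intro h2 h g
    exact (h2 h).inner tendsto_const_nhds
  tfae_have 4 → 3 := by
    intro h4 h g
    exact (h4 h).inner tendsto_const_nhds
  tfae_have 1 → 2 := hs_weak_to_norm e f horth hnz a hA
  tfae_have 3 → 4 := by
    intro h3 h
    rw [show (fun n : ℕ => hilbertSummationOpStar a e f n h)
      = fun n : ℕ => hilbertSummationOp a' f e n h from funext fun n => hstar_eq n h]
    refine hs_weak_to_norm f e horth' hnz' a' hA' ?_ h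
    intro x y
    have := h3 x y
    simpa [hstar_eq] using this
  tfae_have 1 → 3 := by
    intro h1 h g
    have key : ∀ n, (inner ℂ (hilbertSummationOpStar a e f n h) g : ℂ)
        = (starRingEnd ℂ) (inner ℂ (hilbertSummationOp a e f n g) h : ℂ) :=
      fun n => hs_inner_star e f a hA (fun n => by simpa [ha'] using hA' n) n h g
    have h2 := (continuous_star.tendsto _).comp (h1 g h)
    have h3 : Tendsto (fun n : ℕ => (starRingEnd ℂ)
        (inner ℂ (hilbertSummationOp a e f n g) h : ℂ)) atTop (𝓝 (inner ℂ h g : ℂ)) := by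
      simpa [Function.comp_def, Complex.star_def, inner_conj_symm] using h2
    exact h3.congr fun n => (key n).symm
  tfae_have 3 → 1 := by
    intro h3 h g
    have key : ∀ n, (inner ℂ (hilbertSummationOp a e f n h) g : ℂ)
        = (starRingEnd ℂ) (inner ℂ (hilbertSummationOpStar a e f n g) h : ℂ) := by
      intro n
      rw [hs_inner_star e f a hA (fun n => by simpa [ha'] using hA' n) n g h,
        Complex.conj_conj]
    have h2 := (continuous_star.tendsto _).comp (h3 g h)
    have h4 : Tendsto (fun n : ℕ => (starRingEnd ℂ)
        (inner ℂ (hilbertSummationOpStar a e f n g) h : ℂ)) atTop (𝓝 (inner ℂ h g : ℂ)) := by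
      simpa [Function.comp_def, Complex.star_def, inner_conj_symm] using h2
    exact h4.congr fun n => (key n).symm
  tfae_finish
end

section
/- In the Hilbert summability setup, let A = (a_{nk}) be a matrix with Σ_k |a_{nk}|‖P_k‖ < ∞ for each n, let α ≥ 0, and let σ_n^α denote the summation operators for the Cesàro matrix of order α, i.e. a_{nk} := C(n,k)/C(n+α,k) for 0 ≤ k ≤ n and 0 otherwise, with binomial coefficients of non-integer arguments defined via the Gamma function. If σ_n^α(h) → h (weakly or in norm) for all h ∈ H, then there is a constant C with ‖e_j‖‖f_j‖/|⟨e_j, f_j⟩| ≤ C·(j+1)^α for all j ≥ 0. -/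
open Filter Topology Finset

noncomputable def HCLb (α : ℝ) (m : ℕ) : ℝ := ∏ i ∈ Finset.range m, (((i:ℝ)+1+α)/((i:ℝ)+1))
noncomputable def HCLd (α : ℝ) (m : ℕ) : ℝ := ∏ i ∈ Finset.range m, (((i:ℝ)-α-1)/((i:ℝ)+1))

lemma HCLb_succ (α : ℝ) (m : ℕ) : HCLb α (m+1) = HCLb α m * (((m:ℝ)+1+α)/((m:ℝ)+1)) := by
  simp only [HCLb, Finset.prod_range_succ]

lemma HCLd_succ (α : ℝ) (m : ℕ) : HCLd α (m+1) = HCLd α m * (((m:ℝ)-α-1)/((m:ℝ)+1)) := by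
  simp only [HCLd, Finset.prod_range_succ]

lemma HCLb_pos {α : ℝ} (hα : 0 ≤ α) (m : ℕ) : 0 < HCLb α m := by
  apply Finset.prod_pos
  intro i _
  positivity

lemma HCLb_gamma {α : ℝ} (hα : 0 ≤ α) (m : ℕ) :
    (m.factorial : ℝ) * Real.Gamma (α+1) * HCLb α m = Real.Gamma ((m:ℝ) + α + 1) := by
  induction m with
  | zero => simp [HCLb]
  | succ m ih =>
    have h1 : ((m:ℝ) + α + 1) ≠ 0 := by positivity
    have h2 : Real.Gamma (((m:ℝ) + α + 1) + 1) = ((m:ℝ)+α+1) * Real.Gamma ((m:ℝ)+α+1) :=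
      Real.Gamma_add_one h1
    have hm1 : ((m:ℝ)+1) ≠ 0 := by positivity
    have : ((m+1:ℕ):ℝ) + α + 1 = ((m:ℝ) + α + 1) + 1 := by push_cast; ring
    rw [this, h2, HCLb_succ, Nat.factorial_succ, ← ih]
    push_cast
    field_simp
    ring

noncomputable def cesaroEntry (α : ℝ) (n k : ℕ) : ℝ :=
  (n.choose k : ℝ) /
    (Real.Gamma ((n : ℝ) + α + 1) /
      (Real.Gamma ((k : ℝ) + 1) * Real.Gamma ((n : ℝ) + α - k + 1)))

lemma cesaroEntry_of_lt {α : ℝ} {n k : ℕ} (h : n < k) : cesaroEntry α n k = 0 := by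
  simp [cesaroEntry, Nat.choose_eq_zero_of_lt h]

lemma HCLb_mul_entry {α : ℝ} (hα : 0 ≤ α) {n k : ℕ} (hkn : k ≤ n) :
    HCLb α n * cesaroEntry α n k = HCLb α (n - k) := by
  have hc1 : ((n:ℝ) + α - k + 1) = ((n - k : ℕ):ℝ) + α + 1 := by
    rw [Nat.cast_sub hkn]; ring
  have hGk : Real.Gamma ((k:ℝ) + 1) = (k.factorial : ℝ) := by
    exact_mod_cast Real.Gamma_nat_eq_factorial k
  have B1 := HCLb_gamma hα (n - k)
  have B2 := HCLb_gamma hα n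
  have hGpos : 0 < Real.Gamma ((n:ℝ) + α + 1) := Real.Gamma_pos_of_pos (by positivity)
  have hGpos2 : 0 < Real.Gamma (((n - k : ℕ) : ℝ) + α + 1) := Real.Gamma_pos_of_pos (by positivity)
  have hGa : 0 < Real.Gamma (α + 1) := Real.Gamma_pos_of_pos (by positivity)
  have hb1 : 0 < HCLb α (n-k) := HCLb_pos hα _
  have hb2 : 0 < HCLb α n := HCLb_pos hα _
  have hch : (n.choose k : ℝ) = (n.factorial:ℝ) / ((k.factorial:ℝ) * ((n-k).factorial:ℝ)) :=
    Nat.cast_choose ℝ hkn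
  have hf1 : (0:ℝ) < n.factorial := by exact_mod_cast n.factorial_pos
  have hf2 : (0:ℝ) < k.factorial := by exact_mod_cast k.factorial_pos
  have hf3 : (0:ℝ) < (n-k).factorial := by exact_mod_cast (n-k).factorial_pos
  rw [cesaroEntry, hc1, hGk, hch, ← B1, ← B2]
  field_simp

lemma HCLb_rec (α : ℝ) (m : ℕ) : ((m:ℝ)+1) * HCLb α (m+1) = ((m:ℝ)+1+α) * HCLb α m := by
  rw [HCLb_succ]
  have h : ((m:ℝ)+1) ≠ 0 := by positivity
  field_simp

lemma HCLd_rec (α : ℝ) (m : ℕ) : ((m:ℝ)+1) * HCLd α (m+1) = ((m:ℝ)-α-1) * HCLd α m := by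
  rw [HCLd_succ]
  have h : ((m:ℝ)+1) ≠ 0 := by positivity
  field_simp


noncomputable def HCLT (α : ℝ) (N : ℕ) : ℝ := ∑ m ∈ Finset.range (N+1), HCLb α m * HCLd α (N-m)

lemma HCLT_zero (α : ℝ) : HCLT α 0 = 1 := by simp [HCLT, HCLb, HCLd]

lemma HCLT_succ (α : ℝ) (N : ℕ) : ((N:ℝ)+1) * HCLT α (N+1) = (N:ℝ) * HCLT α N := by
  have S1 : ∑ m ∈ Finset.range (N+2), (m:ℝ) * (HCLb α m * HCLd α (N+1-m))
      = ∑ m ∈ Finset.range (N+1), ((m:ℝ)+1+α) * (HCLb α m * HCLd α (N-m)) := by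
    rw [Finset.sum_range_succ']
    have h0 : ((0:ℕ):ℝ) * (HCLb α 0 * HCLd α (N+1-0)) = 0 := by simp
    rw [h0, add_zero]
    apply Finset.sum_congr rfl
    intro m _
    have h1 : N + 1 - (m+1) = N - m := by omega
    have h2 : ((m:ℝ)+1) * HCLb α (m+1) = ((m:ℝ)+1+α) * HCLb α m := HCLb_rec α m
    rw [h1]
    push_cast
    calc ((m:ℝ)+1) * (HCLb α (m+1) * HCLd α (N-m))
        = (((m:ℝ)+1) * HCLb α (m+1)) * HCLd α (N-m) := by ring
      _ = (((m:ℝ)+1+α) * HCLb α m) * HCLd α (N-m) := by rw [h2]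
      _ = ((m:ℝ)+1+α) * (HCLb α m * HCLd α (N-m)) := by ring
  have S2 : ∑ m ∈ Finset.range (N+2), (((N+1-m:ℕ)):ℝ) * (HCLb α m * HCLd α (N+1-m))
      = ∑ m ∈ Finset.range (N+1), ((N:ℝ)-(m:ℝ)-α-1) * (HCLb α m * HCLd α (N-m)) := by
    rw [Finset.sum_range_succ]
    have h0 : ((N+1-(N+1):ℕ):ℝ) * (HCLb α (N+1) * HCLd α (N+1-(N+1))) = 0 := by simp
    rw [h0, add_zero]
    apply Finset.sum_congr rfl
    intro m hm
    have hm' : m ≤ N := by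
      have := Finset.mem_range.mp hm; omega
    have h1 : N + 1 - m = (N - m) + 1 := by omega
    have h2 : (((N-m:ℕ)):ℝ) + 1 ≠ 0 := by positivity
    have h3 : ((((N-m:ℕ)):ℝ)+1) * HCLd α ((N-m)+1) = ((((N-m:ℕ)):ℝ)-α-1) * HCLd α (N-m) :=
      HCLd_rec α (N-m)
    have hc : (((N-m:ℕ)):ℝ) = (N:ℝ) - (m:ℝ) := by
      rw [Nat.cast_sub hm']
    have h4 : (((N+1-m:ℕ)):ℝ) = (((N-m:ℕ)):ℝ) + 1 := by
      rw [h1]; push_cast; ring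
    rw [h4, h1]
    calc ((((N-m:ℕ)):ℝ)+1) * (HCLb α m * HCLd α ((N-m)+1))
        = ((((((N-m:ℕ)):ℝ)+1)) * HCLd α ((N-m)+1)) * HCLb α m := by ring
      _ = (((((N-m:ℕ)):ℝ)-α-1) * HCLd α (N-m)) * HCLb α m := by rw [h3]
      _ = ((N:ℝ)-(m:ℝ)-α-1) * (HCLb α m * HCLd α (N-m)) := by rw [hc]; ring
  have key : ∀ m ∈ Finset.range (N+2), ((N:ℝ)+1) * (HCLb α m * HCLd α (N+1-m))
      = (m:ℝ) * (HCLb α m * HCLd α (N+1-m))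
        + (((N+1-m:ℕ)):ℝ) * (HCLb α m * HCLd α (N+1-m)) := by
    intro m hm
    have hm' : m ≤ N+1 := by
      have := Finset.mem_range.mp hm; omega
    have : (((N+1-m:ℕ)):ℝ) = (N:ℝ) + 1 - (m:ℝ) := by
      rw [Nat.cast_sub hm']; push_cast; ring
    rw [this]; ring
  rw [HCLT, Finset.mul_sum, Finset.sum_congr rfl key, Finset.sum_add_distrib, S1, S2, HCLT,
    Finset.mul_sum, ← Finset.sum_add_distrib]
  apply Finset.sum_congr rfl
  intro m _
  ring

lemma HCLT_eq_zero (α : ℝ) {N : ℕ} (hN : 0 < N) : HCLT α N = 0 := by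
  induction N with
  | zero => omega
  | succ N ih =>
    have h := HCLT_succ α N
    rcases Nat.eq_zero_or_pos N with h0 | hpos
    · subst h0
      norm_num at h
      convert h using 2
    · rw [ih hpos, mul_zero] at h
      have hne : ((N:ℝ)+1) ≠ 0 := by positivity
      exact (mul_eq_zero.mp h).resolve_left hne

lemma HCL_inv {α : ℝ} (hα : 0 ≤ α) {j k : ℕ} (hkj : k ≤ j) :
    ∑ n ∈ Finset.range (j+1), (HCLd α (j-n) * HCLb α n) * cesaroEntry α n k
      = if k = j then 1 else 0 := by
  have hsub : Finset.Ico k (j+1) ⊆ Finset.range (j+1) := by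
    intro x hx
    simp only [Finset.mem_Ico] at hx
    simp only [Finset.mem_range]
    omega
  have hzero : ∀ x ∈ Finset.range (j+1), x ∉ Finset.Ico k (j+1) →
      (HCLd α (j-x) * HCLb α x) * cesaroEntry α x k = 0 := by
    intro x hx hx'
    simp only [Finset.mem_range] at hx
    simp only [Finset.mem_Ico] at hx'
    have hxk : x < k := by omega
    rw [cesaroEntry_of_lt hxk, mul_zero]
  rw [← Finset.sum_subset hsub hzero, Finset.sum_Ico_eq_sum_range]
  have hlen : j + 1 - k = (j - k) + 1 := by omega
  rw [hlen]
  have hterm : ∀ i ∈ Finset.range ((j-k)+1),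
      (HCLd α (j-(k+i)) * HCLb α (k+i)) * cesaroEntry α (k+i) k
        = HCLb α i * HCLd α ((j-k)-i) := by
    intro i hi
    have hi' : i ≤ j - k := by
      have := Finset.mem_range.mp hi; omega
    have h1 : j - (k+i) = (j-k) - i := by omega
    have h2 : HCLb α (k+i) * cesaroEntry α (k+i) k = HCLb α i := by
      have := HCLb_mul_entry hα (Nat.le_add_right k i)
      rwa [show k + i - k = i by omega] at this
    rw [h1, mul_assoc, h2]
    ring
  rw [Finset.sum_congr rfl hterm]
  by_cases hkj' : k = j
  · subst hkj'
    simp [HCLT_zero α ▸ (rfl : HCLT α 0 = HCLT α 0)]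
    have := HCLT_zero α
    rw [HCLT] at this
    simpa using this
  · have hpos : 0 < j - k := by omega
    have := HCLT_eq_zero α hpos
    rw [HCLT] at this
    rw [if_neg hkj']
    exact this

lemma HCL_harm_le : ∀ m : ℕ, 1 ≤ m → ∑ i ∈ Finset.range m, 1/((i:ℝ)+1) ≤ 1 + Real.log m := by
  intro m hm
  induction m with
  | zero => omega
  | succ m ih =>
    rcases Nat.eq_zero_or_pos m with h0 | hpos
    · subst h0; simp
    · have hlog : Real.log m + 1/((m:ℝ)+1) ≤ Real.log ((m:ℝ)+1) := by
        have hx : (0:ℝ) < (m:ℝ)/((m:ℝ)+1) := by positivity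
        have := Real.log_le_sub_one_of_pos hx
        have hm1 : ((m:ℝ)+1) ≠ 0 := by positivity
        have hmpos : (0:ℝ) < (m:ℝ) := by exact_mod_cast hpos
        rw [Real.log_div (by positivity) hm1] at this
        have : Real.log m - Real.log ((m:ℝ)+1) ≤ (m:ℝ)/((m:ℝ)+1) - 1 := this
        have heq : (m:ℝ)/((m:ℝ)+1) - 1 = -(1/((m:ℝ)+1)) := by field_simp; ring
        linarith [heq ▸ this]
      have ihm := ih hpos
      rw [Finset.sum_range_succ]
      push_cast
      linarith
  
lemma HCLb_le_exp {α : ℝ} (hα : 0 ≤ α) (m : ℕ) :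
    HCLb α m ≤ Real.exp (α * ∑ i ∈ Finset.range m, 1/((i:ℝ)+1)) := by
  induction m with
  | zero => simp [HCLb]
  | succ m ih =>
    rw [HCLb_succ, Finset.sum_range_succ, mul_add, Real.exp_add]
    apply mul_le_mul ih _ _ (Real.exp_nonneg _)
    · have h1 : ((m:ℝ)+1+α)/((m:ℝ)+1) = α/((m:ℝ)+1) + 1 := by
        field_simp
        ring
      rw [h1, show α * (1/((m:ℝ)+1)) = α/((m:ℝ)+1) by ring]
      exact Real.add_one_le_exp _
    · positivity

lemma HCLb_le {α : ℝ} (hα : 0 ≤ α) (m : ℕ) :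
    HCLb α m ≤ Real.exp α * ((m:ℝ)+1) ^ α := by
  rcases Nat.eq_zero_or_pos m with h0 | hpos
  · subst h0
    simp [HCLb, Real.one_rpow]
    exact hα
  · have h1 := HCLb_le_exp hα m
    have h2 : α * ∑ i ∈ Finset.range m, 1/((i:ℝ)+1) ≤ α * (1 + Real.log m) :=
      mul_le_mul_of_nonneg_left (HCL_harm_le m hpos) hα
    have hmpos : (0:ℝ) < (m:ℝ) := by exact_mod_cast hpos
    have h3 : Real.exp (α * (1 + Real.log m)) = Real.exp α * (m:ℝ) ^ α := by
      rw [Real.rpow_def_of_pos hmpos, ← Real.exp_add]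
      ring_nf
    have h4 : (m:ℝ) ^ α ≤ ((m:ℝ)+1) ^ α :=
      Real.rpow_le_rpow (le_of_lt hmpos) (by linarith) hα
    calc HCLb α m ≤ Real.exp (α * (1 + Real.log m)) :=
          le_trans h1 (Real.exp_le_exp.mpr h2)
      _ = Real.exp α * (m:ℝ) ^ α := h3
      _ ≤ Real.exp α * ((m:ℝ)+1) ^ α := by
          apply mul_le_mul_of_nonneg_left h4 (Real.exp_nonneg _)

lemma HCLd_abs_rec {α : ℝ} (hα : 0 ≤ α) {m : ℕ} (hm : α + 2 ≤ (m:ℝ)) :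
    |HCLd α (m+1)| * (((m:ℝ)+1) * (m:ℝ)) ≤ |HCLd α m| * ((m:ℝ) * ((m:ℝ)-1)) := by
  rw [HCLd_succ, abs_mul]
  have h1 : |((m:ℝ)-α-1)/((m:ℝ)+1)| = ((m:ℝ)-α-1)/((m:ℝ)+1) := by
    rw [abs_of_nonneg]
    apply div_nonneg (by linarith) (by positivity)
  rw [h1]
  have hm1 : ((m:ℝ)+1) ≠ 0 := by positivity
  have key : |HCLd α m| * (((m:ℝ)-α-1)/((m:ℝ)+1)) * (((m:ℝ)+1) * (m:ℝ))
      = |HCLd α m| * (((m:ℝ)-α-1) * (m:ℝ)) := by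
    field_simp
  rw [key]
  apply mul_le_mul_of_nonneg_left _ (abs_nonneg _)
  have hmnn : (0:ℝ) ≤ (m:ℝ) := by positivity
  nlinarith

lemma HCLd_abs_bound {α : ℝ} (hα : 0 ≤ α) {m₀ : ℕ} (hm₀ : α + 2 ≤ (m₀:ℝ)) (h3 : 3 ≤ m₀) :
    ∀ m, m₀ ≤ m → |HCLd α m| * ((m:ℝ) * ((m:ℝ)-1)) ≤ |HCLd α m₀| * ((m₀:ℝ) * ((m₀:ℝ)-1)) := by
  intro m hm
  induction m, hm using Nat.le_induction with
  | base => exact le_refl _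
  | succ m hm ih =>
    have hα2 : α + 2 ≤ (m:ℝ) := by
      have : (m₀:ℝ) ≤ (m:ℝ) := by exact_mod_cast hm
      linarith
    have := HCLd_abs_rec hα hα2
    calc |HCLd α (m+1)| * (((m+1:ℕ):ℝ) * (((m+1:ℕ):ℝ)-1))
        = |HCLd α (m+1)| * (((m:ℝ)+1) * (m:ℝ)) := by push_cast; ring_nf
      _ ≤ |HCLd α m| * ((m:ℝ) * ((m:ℝ)-1)) := this
      _ ≤ _ := ih

lemma HCLd_sum_le {α : ℝ} (hα : 0 ≤ α) :
    ∃ D : ℝ, 0 ≤ D ∧ ∀ N : ℕ, ∑ m ∈ Finset.range N, |HCLd α m| ≤ D := by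
  set m₀ : ℕ := ⌈α⌉₊ + 3 with hm₀def
  have hm₀ : α + 2 ≤ (m₀:ℝ) := by
    have := Nat.le_ceil α
    have h2 : ((⌈α⌉₊:ℕ):ℝ) + 3 = (m₀:ℝ) := by push_cast [hm₀def]; ring
    linarith
  have h3 : 3 ≤ m₀ := by omega
  have h3r : (3:ℝ) ≤ (m₀:ℝ) := by exact_mod_cast h3
  set G : ℝ := |HCLd α m₀| * ((m₀:ℝ) * ((m₀:ℝ)-1)) with hGdef
  have hG : 0 ≤ G := by
    apply mul_nonneg (abs_nonneg _)
    nlinarith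
  set D : ℝ := (∑ m ∈ Finset.range m₀, |HCLd α m|) + G / ((m₀:ℝ)-1) with hDdef
  have hsum0 : (0:ℝ) ≤ ∑ m ∈ Finset.range m₀, |HCLd α m| :=
    Finset.sum_nonneg fun i _ => abs_nonneg _
  have hD : 0 ≤ D := by
    apply add_nonneg hsum0
    apply div_nonneg hG (by linarith)
  refine ⟨D, hD, ?_⟩
  have claim : ∀ N, m₀ ≤ N → ∑ m ∈ Finset.range N, |HCLd α m| ≤ D - G / ((N:ℝ)-1) := by
    intro N hN
    induction N, hN using Nat.le_induction with
    | base => rw [hDdef]; ring_nf; exact le_refl _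
    | succ N hN ih =>
      have hNr : (m₀:ℝ) ≤ (N:ℝ) := by exact_mod_cast hN
      have hN3 : (3:ℝ) ≤ (N:ℝ) := le_trans h3r hNr
      have hdN : |HCLd α N| ≤ G / ((N:ℝ) * ((N:ℝ)-1)) := by
        have hb := HCLd_abs_bound hα hm₀ h3 N hN
        have hpos : (0:ℝ) < (N:ℝ) * ((N:ℝ)-1) := by nlinarith
        rw [le_div_iff₀ hpos]
        exact hb
      rw [Finset.sum_range_succ]
      have harith : D - G / ((N:ℝ)-1) + G / ((N:ℝ) * ((N:ℝ)-1)) = D - G / (((N+1:ℕ):ℝ)-1) := by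
        push_cast
        have h1 : ((N:ℝ)-1) ≠ 0 := by linarith
        have h2 : (N:ℝ) ≠ 0 := by linarith
        rw [show (N:ℝ)+1-1 = N by ring]
        field_simp
        ring
      linarith
  intro N
  rcases le_or_gt m₀ N with hN | hN
  · have := claim N hN
    have hNr : (m₀:ℝ) ≤ (N:ℝ) := by exact_mod_cast hN
    have h0 : 0 ≤ G / ((N:ℝ)-1) := div_nonneg hG (by linarith)
    exact le_trans (claim N hN) (sub_le_self D h0)
  · have h1 : ∑ m ∈ Finset.range N, |HCLd α m| ≤ ∑ m ∈ Finset.range m₀, |HCLd α m| :=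
      Finset.sum_le_sum_of_subset_of_nonneg (Finset.range_subset_range.mpr hN.le)
        (fun i _ _ => abs_nonneg _)
    have h2 : 0 ≤ G / ((m₀:ℝ)-1) := div_nonneg hG (by linarith)
    rw [hDdef]
    linarith

/-- **Theorem 5.4 (Hilbert Cesàro limitation theorem).** In the Hilbert summability set-up, let
`α ≥ 0`. If the Cesàro means `σ n ^ α h = Σ_{k=0}^n a n k (⟨h, f k⟩/⟨e k, f k⟩) e k` converge to
`h` (weakly or in norm) for every `h ∈ H`, then `‖e j‖‖f j‖/|⟨e j, f j⟩| = O(j^α)`. -/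
theorem hilbert_cesaro_limitation {H : Type*} [NormedAddCommGroup H] [InnerProductSpace ℂ H]
    [CompleteSpace H] (e f : ℕ → H)
    (horth : ∀ j k : ℕ, j ≠ k → (inner ℂ (f k) (e j) : ℂ) = 0)
    (hnz : ∀ k, (inner ℂ (f k) (e k) : ℂ) ≠ 0)
    (α : ℝ) (hα : 0 ≤ α)
    (hconv :
      (∀ h g : H,
        Tendsto (fun n : ℕ => (inner ℂ (∑ k ∈ Finset.range (n + 1),
          (((cesaroEntry α n k : ℝ) : ℂ) *
            ((inner ℂ (f k) h : ℂ) / (inner ℂ (f k) (e k) : ℂ))) • e k) g : ℂ))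
          atTop (𝓝 (inner ℂ h g))) ∨
      (∀ h : H,
        Tendsto (fun n : ℕ => ∑ k ∈ Finset.range (n + 1),
          (((cesaroEntry α n k : ℝ) : ℂ) *
            ((inner ℂ (f k) h : ℂ) / (inner ℂ (f k) (e k) : ℂ))) • e k)
          atTop (𝓝 h))) :
    ∃ C : ℝ, ∀ j : ℕ, ‖e j‖ * ‖f j‖ / ‖(inner ℂ (f j) (e j) : ℂ)‖ ≤ C * ((j : ℝ) + 1) ^ α := by
  classical
  set T : ℕ → H →L[ℂ] H := fun n => ∑ k ∈ Finset.range (n+1),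
    (((cesaroEntry α n k : ℝ) : ℂ) * ((inner ℂ (f k) (e k) : ℂ))⁻¹) •
      ((innerSL ℂ (f k)).smulRight (e k)) with hTdef
  have hT : ∀ (n : ℕ) (h : H), T n h = ∑ k ∈ Finset.range (n+1),
      (((cesaroEntry α n k : ℝ) : ℂ) *
        ((inner ℂ (f k) h : ℂ) / (inner ℂ (f k) (e k) : ℂ))) • e k := by
    intro n h
    rw [hTdef]
    simp only [ContinuousLinearMap.sum_apply, ContinuousLinearMap.smul_apply,
      ContinuousLinearMap.smulRight_apply, innerSL_apply_apply]
    apply Finset.sum_congr rfl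
    intro k _
    rw [smul_smul]
    congr 1
    rw [div_eq_mul_inv]
    ring
  obtain ⟨M, hM⟩ : ∃ M, ∀ n, ‖T n‖ ≤ M := by
    apply banach_steinhaus
    intro h
    rcases hconv with hw | hs
    · have hb : ∀ g : H, ∃ C, ∀ n : ℕ, ‖(innerSL ℂ (T n h)) g‖ ≤ C := by
        intro g
        have ht : Tendsto (fun n : ℕ => (innerSL ℂ (T n h)) g) atTop (𝓝 (inner ℂ h g)) := by
          refine (hw h g).congr ?_
          intro n
          rw [innerSL_apply_apply, hT]
        obtain ⟨C, hC⟩ := (Metric.isBounded_range_of_tendsto _ ht).exists_norm_le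
        exact ⟨C, fun n => hC _ (Set.mem_range_self n)⟩
      obtain ⟨C, hC⟩ := banach_steinhaus hb
      refine ⟨C, fun n => ?_⟩
      have := hC n
      rwa [innerSL_apply_norm] at this
    · have ht : Tendsto (fun n : ℕ => T n h) atTop (𝓝 h) := by
        refine (hs h).congr ?_
        intro n
        rw [hT]
      obtain ⟨C, hC⟩ := (Metric.isBounded_range_of_tendsto _ ht).exists_norm_le
      exact ⟨C, fun n => hC _ (Set.mem_range_self n)⟩
  have hM0 : 0 ≤ M := le_trans (norm_nonneg _) (hM 0)
  have hinv : ∀ j : ℕ,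
      (∑ n ∈ Finset.range (j+1), (((HCLd α (j-n) * HCLb α n : ℝ)) : ℂ) • T n (f j))
        = ((inner ℂ (f j) (f j) : ℂ) / (inner ℂ (f j) (e j) : ℂ)) • e j := by
    intro j
    have step1 : ∀ n ∈ Finset.range (j+1), T n (f j) =
        ∑ k ∈ Finset.range (j+1),
          (((cesaroEntry α n k : ℝ) : ℂ) *
            ((inner ℂ (f k) (f j) : ℂ) / (inner ℂ (f k) (e k) : ℂ))) • e k := by
      intro n hn
      rw [hT]
      apply Finset.sum_subset
      · apply Finset.range_subset_range.mpr
        have := Finset.mem_range.mp hn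
        omega
      · intro k hk hk'
        have hnk : n < k := by
          simp only [Finset.mem_range] at hk hk'
          omega
        rw [cesaroEntry_of_lt hnk]
        simp
    have step2 : (∑ n ∈ Finset.range (j+1),
        (((HCLd α (j-n) * HCLb α n : ℝ)) : ℂ) • T n (f j))
        = ∑ k ∈ Finset.range (j+1),
            ((((∑ n ∈ Finset.range (j+1),
                (HCLd α (j-n) * HCLb α n) * cesaroEntry α n k : ℝ)) : ℂ)
              * ((inner ℂ (f k) (f j) : ℂ) / (inner ℂ (f k) (e k) : ℂ))) • e k := by
      rw [Finset.sum_congr rfl (fun n hn => by rw [step1 n hn, Finset.smul_sum])]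
      rw [Finset.sum_comm]
      apply Finset.sum_congr rfl
      intro k _
      rw [Finset.sum_congr rfl (fun n _ => smul_smul _ _ _), ← Finset.sum_smul]
      congr 1
      push_cast
      rw [Finset.sum_mul]
      apply Finset.sum_congr rfl
      intro n _
      ring
    rw [step2]
    have step3 : ∀ k ∈ Finset.range (j+1),
        ((((∑ n ∈ Finset.range (j+1),
            (HCLd α (j-n) * HCLb α n) * cesaroEntry α n k : ℝ)) : ℂ)
          * ((inner ℂ (f k) (f j) : ℂ) / (inner ℂ (f k) (e k) : ℂ))) • e k
        = if k = j then ((inner ℂ (f j) (f j) : ℂ) / (inner ℂ (f j) (e j) : ℂ)) • e j else 0 := by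
      intro k hk
      have hkj : k ≤ j := by
        have := Finset.mem_range.mp hk
        omega
      rw [HCL_inv hα hkj]
      by_cases hkj' : k = j
      · subst hkj'
        rw [if_pos rfl, if_pos rfl]
        norm_num
      · rw [if_neg hkj', if_neg hkj']
        norm_num
    rw [Finset.sum_congr rfl step3, Finset.sum_ite_eq' (Finset.range (j+1)) j
      (fun _ => ((inner ℂ (f j) (f j) : ℂ) / (inner ℂ (f j) (e j) : ℂ)) • e j),
      if_pos (Finset.self_mem_range_succ j)]
  obtain ⟨D, hD0, hDsum⟩ := HCLd_sum_le hα
  refine ⟨M * (Real.exp α * D), ?_⟩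
  intro j
  have hfj : f j ≠ 0 := by
    intro h0
    exact hnz j (by rw [h0]; exact inner_zero_left _)
  have hfjn : 0 < ‖f j‖ := norm_pos_iff.mpr hfj
  have hKpos : 0 < ‖(inner ℂ (f j) (e j) : ℂ)‖ := norm_pos_iff.mpr (hnz j)
  have hinner : ‖(inner ℂ (f j) (f j) : ℂ)‖ = ‖f j‖^2 := by
    rw [inner_self_eq_norm_sq_to_K (𝕜 := ℂ), norm_pow, RCLike.norm_ofReal, abs_norm]
  have hR : ‖((inner ℂ (f j) (f j) : ℂ) / (inner ℂ (f j) (e j) : ℂ)) • e j‖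
      = ‖f j‖^2 / ‖(inner ℂ (f j) (e j) : ℂ)‖ * ‖e j‖ := by
    rw [norm_smul, norm_div, hinner]
  have hL : ‖∑ n ∈ Finset.range (j+1), (((HCLd α (j-n) * HCLb α n : ℝ)) : ℂ) • T n (f j)‖
      ≤ (∑ n ∈ Finset.range (j+1), |HCLd α (j-n) * HCLb α n|) * (M * ‖f j‖) := by
    calc ‖∑ n ∈ Finset.range (j+1), (((HCLd α (j-n) * HCLb α n : ℝ)) : ℂ) • T n (f j)‖
        ≤ ∑ n ∈ Finset.range (j+1), ‖(((HCLd α (j-n) * HCLb α n : ℝ)) : ℂ) • T n (f j)‖ :=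
          norm_sum_le _ _
      _ ≤ ∑ n ∈ Finset.range (j+1), |HCLd α (j-n) * HCLb α n| * (M * ‖f j‖) := by
          apply Finset.sum_le_sum
          intro n _
          rw [norm_smul, Complex.norm_real]
          apply mul_le_mul_of_nonneg_left _ (abs_nonneg _)
          calc ‖T n (f j)‖ ≤ ‖T n‖ * ‖f j‖ := (T n).le_opNorm _
            _ ≤ M * ‖f j‖ := mul_le_mul_of_nonneg_right (hM n) (norm_nonneg _)
      _ = (∑ n ∈ Finset.range (j+1), |HCLd α (j-n) * HCLb α n|) * (M * ‖f j‖) := by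
          rw [Finset.sum_mul]
  have hS : (∑ n ∈ Finset.range (j+1), |HCLd α (j-n) * HCLb α n|)
      ≤ (Real.exp α * ((j:ℝ)+1) ^ α) * D := by
    have hterm : ∀ n ∈ Finset.range (j+1), |HCLd α (j-n) * HCLb α n|
        ≤ |HCLd α (j-n)| * (Real.exp α * ((j:ℝ)+1) ^ α) := by
      intro n hn
      have hn' : n ≤ j := by
        have := Finset.mem_range.mp hn
        omega
      rw [abs_mul, abs_of_pos (HCLb_pos hα n)]
      apply mul_le_mul_of_nonneg_left _ (abs_nonneg _)
      calc HCLb α n ≤ Real.exp α * ((n:ℝ)+1) ^ α := HCLb_le hα n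
        _ ≤ Real.exp α * ((j:ℝ)+1) ^ α := by
            apply mul_le_mul_of_nonneg_left _ (Real.exp_nonneg _)
            apply Real.rpow_le_rpow (by positivity) _ hα
            have : (n:ℝ) ≤ (j:ℝ) := by exact_mod_cast hn'
            linarith
    calc (∑ n ∈ Finset.range (j+1), |HCLd α (j-n) * HCLb α n|)
        ≤ ∑ n ∈ Finset.range (j+1), |HCLd α (j-n)| * (Real.exp α * ((j:ℝ)+1) ^ α) :=
          Finset.sum_le_sum hterm
      _ = (∑ n ∈ Finset.range (j+1), |HCLd α (j-n)|) * (Real.exp α * ((j:ℝ)+1) ^ α) := by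
          rw [Finset.sum_mul]
      _ = (∑ m ∈ Finset.range (j+1), |HCLd α m|) * (Real.exp α * ((j:ℝ)+1) ^ α) := by
          congr 1
          have := Finset.sum_range_reflect (fun m => |HCLd α m|) (j+1)
          simpa using this
      _ ≤ D * (Real.exp α * ((j:ℝ)+1) ^ α) := by
          apply mul_le_mul_of_nonneg_right (hDsum (j+1)) (by positivity)
      _ = (Real.exp α * ((j:ℝ)+1) ^ α) * D := by ring
  have main : ‖f j‖^2 / ‖(inner ℂ (f j) (e j) : ℂ)‖ * ‖e j‖
      ≤ ((Real.exp α * ((j:ℝ)+1) ^ α) * D) * (M * ‖f j‖) := by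
    rw [← hR, ← hinv j]
    refine le_trans hL ?_
    apply mul_le_mul_of_nonneg_right hS (by positivity)
  have hgoal : (‖e j‖ * ‖f j‖ / ‖(inner ℂ (f j) (e j) : ℂ)‖) * ‖f j‖
      ≤ (M * (Real.exp α * D) * (((j:ℝ)+1) ^ α)) * ‖f j‖ := by
    have heq : (‖e j‖ * ‖f j‖ / ‖(inner ℂ (f j) (e j) : ℂ)‖) * ‖f j‖
        = ‖f j‖^2 / ‖(inner ℂ (f j) (e j) : ℂ)‖ * ‖e j‖ := by
      field_simp
    rw [heq]
    refine le_trans main (le_of_eq ?_)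
    ring
  exact le_of_mul_le_mul_right hgoal hfjn
end
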